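/- Let (W,S) be a Coxeter system and let K be a subset of W that admits a unique minimal element u in the Bruhat order. Then, for any two standard parabolic subgroups W₁ and W₂ of W, the set W₁ K W₂ = { a k b : a ∈ W₁, k ∈ K, b ∈ W₂ } has a unique minimal element in the Bruhat order, and this element is the unique minimal element of the double coset W₁ u W₂ (which exists). In particular, any double coset W₁ w W₂ of a pair of standard parabolic subgroups has a unique minimal element in the Bruhat order. -/

import Mathlib

variable {B W : Type*} [Group W] {M : CoxeterMatrix B}

/-- The (strong) Bruhat order on the Coxeter group `W`: `u ≤ v` if and only if some
reduced word for `v` admits a sublist whose product is `u`. -/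
def BruhatLE (cs : CoxeterSystem M W) (u v : W) : Prop :=
  ∃ ω : List B, cs.IsReduced ω ∧ cs.wordProd ω = v ∧
    ∃ ω' : List B, ω'.Sublist ω ∧ cs.wordProd ω' = u

/-- The strict Bruhat order. -/
def BruhatLT (cs : CoxeterSystem M W) (u v : W) : Prop :=
  BruhatLE cs u v ∧ u ≠ v

/-- `m` is the unique minimal element of `K` in the Bruhat order, i.e. `m ∈ K` and
`m` is Bruhat-below every element of `K`. -/
def IsBrMin (cs : CoxeterSystem M W) (K : Set W) (m : W) : Prop :=
  m ∈ K ∧ ∀ x ∈ K, BruhatLE cs m x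

/-- `m` is the unique maximal element of `K` in the Bruhat order, i.e. `m ∈ K` and
`m` is Bruhat-above every element of `K`. -/
def IsBrMax (cs : CoxeterSystem M W) (K : Set W) (m : W) : Prop :=
  m ∈ K ∧ ∀ x ∈ K, BruhatLE cs x m

/-- A standard parabolic subgroup: a subgroup generated by a subset of the simple
reflections. -/
def IsStdParabolic (cs : CoxeterSystem M W) (P : Subgroup W) : Prop :=
  ∃ X : Set B, P = Subgroup.closure (cs.simple '' X)

/-- The left coset `u•W₁ = {u * b : b ∈ W₁}`. -/
def lCoset (W₁ : Subgroup W) (u : W) : Set W := {x | ∃ b ∈ W₁, x = u * b}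

/-- The double coset `W₁ u W₂ = {a * u * b : a ∈ W₁, b ∈ W₂}`. -/
def dblCoset (W₁ W₂ : Subgroup W) (u : W) : Set W :=
  {x | ∃ a ∈ W₁, ∃ b ∈ W₂, x = a * u * b}

/-!
Write `u ≤ v` for the subword order `BruhatLE`, and compare it with the order `BruhatChain`
generated by `u < u t` for reflections `t` with `ℓ u < ℓ (u t)`. Tits' parity cocycle
`inversionParity` shows that a reflection `t` with `ℓ (w t) < ℓ w` occurs in the right inversion
sequence of every word for `w` (strong exchange), so whatever lies below `v` by a chain is a
subword of every word for `v`. Conversely Deodhar's lifting property, proved for chains by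
induction on length, turns subwords into chains. Hence `≤` is transitive and, for `s` simple,
`u ≤ v` implies `s u ≤ s v` or `u ≤ s v`.

Let `m` have minimal length in `W₁ w W₂`. No simple reflection of `W₁` shortens `m` on the left,
none of `W₂` on the right, so the lifting property turns `m ≤ v` into `m ≤ a v b` for all
`a ∈ W₁`, `b ∈ W₂`. With `v = m` this makes `m` the minimum of `W₁ w W₂`; for `w = u`, the chain
`m ≤ u ≤ k` makes it the minimum of `W₁ K W₂`.
-/

open List

namespace CoxeterSystem

variable (cs : CoxeterSystem M W)

local prefix:100 "σ" => cs.simple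
local prefix:100 "π" => cs.wordProd
local prefix:100 "ℓ" => cs.length

open scoped Classical

theorem reverse_alternatingWord_two_mul (i j : B) (m : ℕ) :
    (alternatingWord i j (2 * m)).reverse = alternatingWord j i (2 * m) := by
  apply List.ext_getElem (by simp)
  intro k hk _
  simp only [length_reverse, length_alternatingWord] at hk
  rw [getElem_reverse, getElem_alternatingWord _ _ _ _ (by simp; omega),
    getElem_alternatingWord _ _ _ _ hk]
  simp only [length_alternatingWord]
  have : Even (2 * m + (2 * m - 1 - k)) ↔ ¬ Even (2 * m + k) := by
    have hodd : ¬ Even (2 * m - 1) := Nat.not_even_iff_odd.mpr ⟨m - 1, by omega⟩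
    rw [Nat.even_add, Nat.even_add, Nat.even_sub (by omega)]
    simp [hodd]
  by_cases h : Even (2 * m + k) <;> simp_all

theorem pow_mul_eq_prod_map_alternatingWord {G : Type*} [Monoid G] (f : B → G) (i j : B)
    (m : ℕ) : (f i * f j) ^ m = ((alternatingWord i j (2 * m)).map f).prod := by
  induction m with
  | zero => simp [alternatingWord]
  | succ m ih =>
    rw [pow_succ', ih, show 2 * (m + 1) = 2 * m + 1 + 1 by ring, alternatingWord_succ',
      alternatingWord_succ']
    simp [mul_assoc]

theorem even_count_rightInvSeq_alternatingWord (i j : B) (t : W) :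
    Even ((cs.rightInvSeq (alternatingWord i j (2 * M i j))).count t) := by
  set m := M i j
  set L := cs.leftInvSeq (alternatingWord j i (2 * m))
  have hL : ∀ k (hk : k < 2 * m), L[k]'(by simp [L]; omega) = σ j * (σ i * σ j) ^ k := by
    intro k hk
    rw [cs.getElem_leftInvSeq_alternatingWord j i m k hk, prod_alternatingWord_eq_mul_pow]
    simp [Nat.not_even_bit1, show (2 * k + 1) / 2 = k by omega]
  have hperiod : L.drop m = L.take m := by
    apply List.ext_getElem (by simp [L]; omega)
    intro k hk _
    simp only [length_drop, L, length_leftInvSeq, length_alternatingWord] at hk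
    rw [getElem_drop, getElem_take, hL _ (by omega), hL _ (by omega), pow_add,
      cs.simple_mul_simple_pow, one_mul]
  have hL2 : cs.rightInvSeq (alternatingWord i j (2 * m)) = L.reverse := by
    rw [← reverse_alternatingWord_two_mul, cs.rightInvSeq_reverse]
  rw [hL2, count_reverse, ← take_append_drop m L, count_append, hperiod]
  exact ⟨_, rfl⟩

noncomputable def reflectionAction (i : B) : Function.End (W × ZMod 2) :=
  fun p => (σ i * p.1 * σ i, p.2 + if p.1 = σ i then 1 else 0)

theorem prod_map_reflectionAction_apply (ω : List B) (p : W × ZMod 2) :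
    (ω.map cs.reflectionAction).prod p
      = (π ω * p.1 * (π ω)⁻¹, p.2 + ((cs.rightInvSeq ω).count p.1 : ZMod 2)) := by
  induction ω generalizing p with
  | nil => simp [Function.End.one_def]
  | cons i ω ih =>
    have hconj : π ω * p.1 * (π ω)⁻¹ = σ i ↔ (π ω)⁻¹ * σ i * π ω = p.1 := by
      constructor <;> intro h <;> rw [← h] <;> group
    rw [map_cons, prod_cons]
    change cs.reflectionAction i ((ω.map cs.reflectionAction).prod p) = _
    rw [ih]
    simp only [reflectionAction, rightInvSeq, count_cons, beq_iff_eq, hconj, wordProd_cons,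
      mul_inv_rev, inv_simple, Nat.cast_add, Nat.cast_ite, Nat.cast_one, Nat.cast_zero,
      Prod.mk.injEq]
    exact ⟨by group, by ring⟩

theorem isLiftable_reflectionAction : M.IsLiftable cs.reflectionAction := by
  intro i j
  funext p
  have hprod : π (alternatingWord i j (2 * M i j)) = 1 := by
    rw [cs.prod_alternatingWord_eq_mul_pow, if_pos (even_two_mul _), one_mul,
      Nat.mul_div_cancel_left _ two_pos, cs.simple_mul_simple_pow]
  rw [pow_mul_eq_prod_map_alternatingWord, prod_map_reflectionAction_apply, hprod,
    (even_count_rightInvSeq_alternatingWord cs i j p.1).natCast_zmod_two]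
  simp [Function.End.one_def]

noncomputable def reflectionRep : W →* Function.End (W × ZMod 2) :=
  cs.lift ⟨cs.reflectionAction, cs.isLiftable_reflectionAction⟩

theorem reflectionRep_wordProd (ω : List B) :
    cs.reflectionRep (π ω) = (ω.map cs.reflectionAction).prod := by
  rw [wordProd, map_list_prod, map_map]
  congr 1
  exact List.map_congr_left fun i _ => cs.lift_apply_simple _ i

/-- Parity of the number of occurrences of `t` in the right inversion sequence of any word for
`w` (`inversionParity_wordProd`); defining it through `reflectionRep` makes it independent of
the word. -/
noncomputable def inversionParity (w t : W) : ZMod 2 := (cs.reflectionRep w (t, 0)).2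

theorem inversionParity_wordProd (ω : List B) (t : W) :
    cs.inversionParity (π ω) t = (cs.rightInvSeq ω).count t := by
  simp [inversionParity, reflectionRep_wordProd, prod_map_reflectionAction_apply]

theorem reflectionRep_apply (w t : W) (ε : ZMod 2) :
    cs.reflectionRep w (t, ε) = (w * t * w⁻¹, ε + cs.inversionParity w t) := by
  obtain ⟨ω, rfl⟩ := cs.wordProd_surjective w
  simp [inversionParity, reflectionRep_wordProd, prod_map_reflectionAction_apply]

theorem inversionParity_mul (w v t : W) :
    cs.inversionParity (w * v) t
      = cs.inversionParity v t + cs.inversionParity w (v * t * v⁻¹) := by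
  have h := congrArg Prod.snd (reflectionRep_apply cs (w * v) t 0)
  rw [map_mul] at h
  change (cs.reflectionRep w (cs.reflectionRep v (t, 0))).2 = _ at h
  rw [reflectionRep_apply, reflectionRep_apply] at h
  simpa using h.symm

theorem inversionParity_simple (i : B) (t : W) :
    cs.inversionParity (σ i) t = if t = σ i then 1 else 0 := by
  have h := cs.inversionParity_wordProd [i] t
  rw [wordProd_singleton, rightInvSeq_singleton, count_singleton] at h
  rw [h]
  by_cases ht : t = σ i <;> simp [ht, Ne.symm]

theorem inversionParity_one (t : W) : cs.inversionParity 1 t = 0 := by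
  simp [inversionParity, Function.End.one_def]

theorem inversionParity_self {t : W} (ht : cs.IsReflection t) : cs.inversionParity t t = 1 := by
  obtain ⟨v, i, rfl⟩ := ht
  have hinv := cs.inversionParity_mul v v⁻¹ (v * σ i * v⁻¹)
  have e₁ : v⁻¹ * (v * σ i * v⁻¹) * v⁻¹⁻¹ = σ i := by group
  have e₂ : σ i * σ i * (σ i)⁻¹ = σ i := by group
  rw [mul_inv_cancel, inversionParity_one, e₁] at hinv
  rw [inversionParity_mul, inversionParity_mul, e₁, e₂, inversionParity_simple, if_pos rfl]
  generalize cs.inversionParity v⁻¹ _ = x, cs.inversionParity v (σ i) = y at hinv ⊢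
  revert x y
  decide

theorem mem_rightInvSeq_of_inversionParity_eq_one {ω : List B} {t : W}
    (h : cs.inversionParity (π ω) t = 1) : t ∈ cs.rightInvSeq ω := by
  rw [inversionParity_wordProd] at h
  by_contra hmem
  rw [count_eq_zero.mpr hmem] at h
  exact zero_ne_one h

theorem inversionParity_eq_one_iff {w t : W} :
    cs.inversionParity w t = 1 ↔ cs.IsRightInversion w t := by
  have hred : ∀ {x : W}, cs.inversionParity x t = 1 → cs.IsRightInversion x t := fun {x} h => by
    obtain ⟨ω, hω, rfl⟩ := cs.exists_isReduced x
    exact cs.isRightInversion_of_mem_rightInvSeq hω (cs.mem_rightInvSeq_of_inversionParity_eq_one h)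
  refine ⟨hred, fun ⟨ht, hlt⟩ => by_contra fun hne => ?_⟩
  have hsplit := cs.inversionParity_mul (w * t) t t
  rw [mul_assoc, ht.mul_self, mul_one, inversionParity_self cs ht, one_mul, ht.inv] at hsplit
  have hwt : cs.inversionParity (w * t) t = 1 := by
    generalize cs.inversionParity w t = x, cs.inversionParity (w * t) t = y at hsplit hne ⊢
    revert x y
    decide
  have := (hred hwt).2
  rw [mul_assoc, ht.mul_self, mul_one] at this
  omega

theorem mem_rightInvSeq_of_isRightInversion {ω : List B} {t : W}
    (h : cs.IsRightInversion (π ω) t) : t ∈ cs.rightInvSeq ω :=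
  cs.mem_rightInvSeq_of_inversionParity_eq_one (cs.inversionParity_eq_one_iff.mpr h)

theorem exists_wordProd_eraseIdx_eq_mul {ω : List B} {t : W}
    (h : cs.IsRightInversion (π ω) t) : ∃ k < ω.length, π (ω.eraseIdx k) = π ω * t := by
  obtain ⟨k, hk, rfl⟩ := mem_iff_getElem.mp (cs.mem_rightInvSeq_of_isRightInversion h)
  refine ⟨k, by simpa using hk, ?_⟩
  rw [← wordProd_mul_getD_rightInvSeq, getD_eq_getElem]

theorem simple_mul_eq_mul_of_length_lt {x t : W} {i : B} (ht : cs.IsReflection t)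
    (h₁ : ℓ x < ℓ (x * t)) (h₂ : ℓ (σ i * x * t) < ℓ (σ i * x)) : σ i * x = x * t := by
  have hsx : cs.inversionParity (σ i * x) t = 1 := (cs.inversionParity_eq_one_iff).mpr ⟨ht, h₂⟩
  have hx : cs.inversionParity x t ≠ 1 := fun h => by
    have := (cs.inversionParity_eq_one_iff.mp h).2
    omega
  rw [inversionParity_mul, inversionParity_simple] at hsx
  have hconj : x * t * x⁻¹ = σ i := by
    by_contra hne
    rw [if_neg hne, add_zero] at hsx
    exact hx hsx
  rw [← hconj]
  group

def BruhatStep (u v : W) : Prop := ∃ t, cs.IsReflection t ∧ v = u * t ∧ ℓ u < ℓ v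

def BruhatChain (u v : W) : Prop := Relation.ReflTransGen cs.BruhatStep u v

variable {cs}

theorem bruhatStep_simple_mul {x : W} {i : B} (h : ℓ x < ℓ (σ i * x)) :
    cs.BruhatStep x (σ i * x) :=
  ⟨x⁻¹ * σ i * x, by simpa using (cs.isReflection_simple i).conj x⁻¹, by group, h⟩

theorem bruhatStep_simple_mul_of_lt {x : W} {i : B} (h : ℓ (σ i * x) < ℓ x) :
    cs.BruhatStep (σ i * x) x := by
  have := bruhatStep_simple_mul (x := σ i * x) (by rwa [simple_mul_simple_cancel_left])
  rwa [simple_mul_simple_cancel_left] at this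

theorem BruhatChain.exists_sublist {u v : W} (h : cs.BruhatChain u v) {ω : List B}
    (hω : π ω = v) : ∃ ω' : List B, ω'.Sublist ω ∧ π ω' = u := by
  induction h generalizing ω with
  | refl => exact ⟨ω, .refl _, hω⟩
  | @tail b c _ hbc ih =>
    obtain ⟨t, ht, rfl, hlt⟩ := hbc
    have hbt : b * t * t = b := by rw [mul_assoc, ht.mul_self, mul_one]
    obtain ⟨k, -, hk⟩ := cs.exists_wordProd_eraseIdx_eq_mul (t := t) ⟨ht, by rwa [hω, hbt]⟩
    obtain ⟨ω', hsub, hω'⟩ := ih (by rw [hk, hω, hbt])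
    exact ⟨ω', hsub.trans (eraseIdx_sublist ω k), hω'⟩

variable (cs) in
/-- Deodhar's lifting property at `w`, for the chain order. Its two halves are proved by a joint
induction on `ℓ w`. -/
def LiftingProperty (w : W) : Prop :=
  ∀ (i : B) (u : W), cs.BruhatChain u w →
    (ℓ w < ℓ (σ i * w) → cs.BruhatChain (σ i * u) (σ i * w)) ∧
    (ℓ (σ i * w) < ℓ w → ℓ u < ℓ (σ i * u) → cs.BruhatChain u (σ i * w))

theorem liftingProperty_up {w : W} (ih : ∀ c, ℓ c < ℓ w → cs.LiftingProperty c) {i : B} {u : W}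
    (hw : ℓ w < ℓ (σ i * w)) (huw : cs.BruhatChain u w) :
    cs.BruhatChain (σ i * u) (σ i * w) := by
  have hstep : cs.BruhatStep w (σ i * w) := bruhatStep_simple_mul hw
  by_cases hu : ℓ (σ i * u) < ℓ u
  · exact .head (bruhatStep_simple_mul_of_lt hu) (huw.tail hstep)
  have hu' : ℓ u < ℓ (σ i * u) := by have := cs.length_simple_mul u i; omega
  rcases Relation.ReflTransGen.cases_tail huw with rfl | ⟨c, huc, t, ht, rfl, hct⟩
  · exact .refl
  by_cases hc : ℓ c < ℓ (σ i * c)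
  · refine ((ih c hct i u huc).1 hc).tail ⟨t, ht, by group, ?_⟩
    have := cs.length_simple_mul c i
    have := cs.length_simple_mul (c * t) i
    rw [← mul_assoc] at this
    omega
  · have hc' : ℓ (σ i * c) < ℓ c := by have := cs.length_simple_mul c i; omega
    have hu_sc := (ih c hct i u huc).2 hc' hu'
    have h := (ih (σ i * c) (by omega) i u hu_sc).1 (by rwa [simple_mul_simple_cancel_left])
    rw [simple_mul_simple_cancel_left] at h
    exact (h.tail ⟨t, ht, rfl, hct⟩).tail hstep

theorem liftingProperty_down {w : W} (ih : ∀ c, ℓ c < ℓ w → cs.LiftingProperty c) {i : B}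
    {u : W} (hw : ℓ (σ i * w) < ℓ w) (hu : ℓ u < ℓ (σ i * u)) (huw : cs.BruhatChain u w) :
    cs.BruhatChain u (σ i * w) := by
  rcases Relation.ReflTransGen.cases_tail huw with rfl | ⟨d, hud, t, ht, rfl, hdt⟩
  · omega
  have hlen_d := cs.length_simple_mul d i
  have hlen_w := cs.length_simple_mul (d * t) i
  have hstep : ℓ (σ i * d) < ℓ (σ i * (d * t)) → cs.BruhatStep (σ i * d) (σ i * (d * t)) :=
    fun h => ⟨t, ht, by group, h⟩
  by_cases hd : ℓ (σ i * d) < ℓ d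
  · exact ((ih d hdt i u hud).2 hd hu).tail (hstep (by omega))
  by_cases hlt : ℓ (σ i * d) < ℓ (σ i * (d * t))
  · exact (Relation.ReflTransGen.head (bruhatStep_simple_mul hu)
      ((ih d hdt i u hud).1 (by omega))).tail (hstep hlt)
  -- Now `ℓ w = ℓ d + 1` by parity, and the exchange lemma forces `σ i * w = d`.
  have hparity := cs.length_mul_mod_two d t
  obtain ⟨r, hr⟩ := ht.odd_length
  have hbt : σ i * (d * t) * t = σ i * d := by rw [mul_assoc, mul_assoc, ht.mul_self, mul_one]
  have heq := cs.simple_mul_eq_mul_of_length_lt (x := σ i * (d * t)) (i := i) ht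
    (by rw [hbt]; omega) (by rwa [simple_mul_simple_cancel_left, mul_assoc, ht.mul_self, mul_one])
  rw [simple_mul_simple_cancel_left, hbt] at heq
  rwa [heq, simple_mul_simple_cancel_left]

theorem liftingProperty (w : W) : cs.LiftingProperty w := by
  induction w using (InvImage.wf cs.length wellFounded_lt).induction with
  | _ w ih =>
    exact fun i u huw => ⟨fun hw => liftingProperty_up ih hw huw,
      fun hw hu => liftingProperty_down ih hw hu huw⟩

theorem BruhatChain.simple_mul_or {u v : W} (h : cs.BruhatChain u v) (i : B) :
    cs.BruhatChain (σ i * u) (σ i * v) ∨ cs.BruhatChain u (σ i * v) := by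
  have hv := cs.length_simple_mul v i
  have hu := cs.length_simple_mul u i
  by_cases hvi : ℓ v < ℓ (σ i * v)
  · exact .inl ((liftingProperty v i u h).1 hvi)
  by_cases hui : ℓ u < ℓ (σ i * u)
  · exact .inr ((liftingProperty v i u h).2 (by omega) hui)
  refine .inl ((liftingProperty v i (σ i * u) ?_).2 (by omega) ?_)
  · exact .head (bruhatStep_simple_mul_of_lt (by omega)) h
  · rw [simple_mul_simple_cancel_left]; omega

theorem bruhatChain_wordProd_of_sublist {ω ω' : List B} (hω : cs.IsReduced ω)
    (h : ω'.Sublist ω) : cs.BruhatChain (π ω') (π ω) := by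
  induction ω generalizing ω' with
  | nil => rw [sublist_nil.mp h]; exact .refl
  | cons i ρ ih =>
    have hρ : cs.IsReduced ρ := by simpa using hω.drop 1
    have hup : ℓ (π ρ) < ℓ (σ i * π ρ) := by
      have := hω.eq
      rw [wordProd_cons, length_cons, ← hρ.eq] at this
      omega
    rw [wordProd_cons]
    rcases sublist_cons_iff.mp h with h | ⟨γ, rfl, hγ⟩
    · exact (ih hρ h).tail (bruhatStep_simple_mul hup)
    · rw [wordProd_cons]
      exact (liftingProperty _ i _ (ih hρ hγ)).1 hup

theorem bruhatLE_iff_bruhatChain {u v : W} : BruhatLE cs u v ↔ cs.BruhatChain u v := by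
  constructor
  · rintro ⟨ω, hω, rfl, ω', hsub, rfl⟩
    exact bruhatChain_wordProd_of_sublist hω hsub
  · intro h
    obtain ⟨ω, hω, rfl⟩ := cs.exists_isReduced v
    obtain ⟨ω', hsub, rfl⟩ := h.exists_sublist rfl
    exact ⟨ω, hω, rfl, ω', hsub, rfl⟩

variable (cs) in
theorem bruhatLE_refl (u : W) : BruhatLE cs u u :=
  bruhatLE_iff_bruhatChain.mpr .refl

theorem _root_.BruhatLE.trans {u v w : W} (huv : BruhatLE cs u v) (hvw : BruhatLE cs v w) :
    BruhatLE cs u w :=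
  bruhatLE_iff_bruhatChain.mpr
    ((bruhatLE_iff_bruhatChain.mp huv).trans (bruhatLE_iff_bruhatChain.mp hvw))

theorem _root_.BruhatLE.inv {u v : W} (h : BruhatLE cs u v) : BruhatLE cs u⁻¹ v⁻¹ := by
  obtain ⟨ω, hω, rfl, ω', hsub, rfl⟩ := h
  exact ⟨ω.reverse, hω.reverse, wordProd_reverse cs ω, ω'.reverse, hsub.reverse,
    wordProd_reverse cs ω'⟩

theorem bruhatLE_simple_mul {x : W} {i : B} (h : ℓ x < ℓ (σ i * x)) :
    BruhatLE cs x (σ i * x) :=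
  bruhatLE_iff_bruhatChain.mpr (.single (bruhatStep_simple_mul h))

theorem _root_.BruhatLE.simple_mul_or {u v : W} (h : BruhatLE cs u v) (i : B) :
    BruhatLE cs (σ i * u) (σ i * v) ∨ BruhatLE cs u (σ i * v) := by
  simpa only [bruhatLE_iff_bruhatChain] using (bruhatLE_iff_bruhatChain.mp h).simple_mul_or i

theorem _root_.BruhatLE.mul_left_of_forall_length_le {P : Subgroup W} (hP : IsStdParabolic cs P)
    {x v a : W} (hx : ∀ a ∈ P, ℓ x ≤ ℓ (a * x)) (h : BruhatLE cs x v) (ha : a ∈ P) :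
    BruhatLE cs x (a * v) := by
  obtain ⟨X, rfl⟩ := hP
  have hstep : ∀ j ∈ X, ∀ y, BruhatLE cs x y → BruhatLE cs x (σ j * y) := by
    intro j hj y hy
    have hjx : ℓ x < ℓ (σ j * x) :=
      lt_of_le_of_ne (hx _ (Subgroup.subset_closure ⟨j, hj, rfl⟩))
        (cs.length_simple_mul_ne x j).symm
    exact (hy.simple_mul_or j).elim (bruhatLE_simple_mul hjx).trans id
  induction ha using Subgroup.closure_induction_left with
  | one => simpa using h
  | mul_left _ hs y _ ih =>
    obtain ⟨j, hj, rfl⟩ := hs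
    simpa [mul_assoc] using hstep j hj _ ih
  | inv_mul_cancel _ hs y _ ih =>
    obtain ⟨j, hj, rfl⟩ := hs
    simpa [mul_assoc] using hstep j hj _ ih

theorem _root_.BruhatLE.mul_right_of_forall_length_le {P : Subgroup W}
    (hP : IsStdParabolic cs P) {x v b : W} (hx : ∀ b ∈ P, ℓ x ≤ ℓ (x * b))
    (h : BruhatLE cs x v) (hb : b ∈ P) : BruhatLE cs x (v * b) := by
  have hx' : ∀ a ∈ P, ℓ x⁻¹ ≤ ℓ (a * x⁻¹) := fun a ha => by
    simpa [← cs.length_inv (a * x⁻¹)] using hx a⁻¹ (P.inv_mem ha)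
  simpa using (h.inv.mul_left_of_forall_length_le hP hx' (P.inv_mem hb)).inv

theorem exists_mem_dblCoset_bruhatLE_mul_mul {W₁ W₂ : Subgroup W} (h₁ : IsStdParabolic cs W₁)
    (h₂ : IsStdParabolic cs W₂) (w : W) :
    ∃ m ∈ dblCoset W₁ W₂ w,
      ∀ v, BruhatLE cs m v → ∀ a ∈ W₁, ∀ b ∈ W₂, BruhatLE cs m (a * v * b) := by
  obtain ⟨m, hm, hmin⟩ := (InvImage.wf cs.length wellFounded_lt).has_min (dblCoset W₁ W₂ w)
    ⟨w, 1, W₁.one_mem, 1, W₂.one_mem, by group⟩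
  obtain ⟨a₀, ha₀, b₀, hb₀, rfl⟩ := hm
  have hm₁ : ∀ a ∈ W₁, ℓ (a₀ * w * b₀) ≤ ℓ (a * (a₀ * w * b₀)) := fun a ha =>
    not_lt.mp (hmin _ ⟨a * a₀, W₁.mul_mem ha ha₀, b₀, hb₀, by group⟩)
  have hm₂ : ∀ b ∈ W₂, ℓ (a₀ * w * b₀) ≤ ℓ (a₀ * w * b₀ * b) := fun b hb =>
    not_lt.mp (hmin _ ⟨a₀, ha₀, b₀ * b, W₂.mul_mem hb₀ hb, by group⟩)
  exact ⟨_, ⟨a₀, ha₀, b₀, hb₀, rfl⟩, fun v hv a ha b hb =>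
    (hv.mul_left_of_forall_length_le h₁ hm₁ ha).mul_right_of_forall_length_le h₂ hm₂ hb⟩

theorem isBrMin_dblCoset {W₁ W₂ : Subgroup W} {w m : W} (hm : m ∈ dblCoset W₁ W₂ w)
    (hlift : ∀ v, BruhatLE cs m v → ∀ a ∈ W₁, ∀ b ∈ W₂, BruhatLE cs m (a * v * b)) :
    IsBrMin cs (dblCoset W₁ W₂ w) m := by
  refine ⟨hm, ?_⟩
  obtain ⟨a₀, ha₀, b₀, hb₀, rfl⟩ := hm
  rintro _ ⟨a, ha, b, hb, rfl⟩
  simpa [mul_assoc] using hlift _ (cs.bruhatLE_refl _) (a * a₀⁻¹) (W₁.mul_mem ha (W₁.inv_mem ha₀))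
    (b₀⁻¹ * b) (W₂.mul_mem (W₂.inv_mem hb₀) hb)

end CoxeterSystem

open CoxeterSystem in
/-- If `K ⊆ W` has a unique Bruhat-minimal element `u`, then for any two standard
parabolic subgroups `W₁, W₂`, the set `W₁ K W₂` has a unique minimal element, and this
element is the unique minimal element of the double coset `W₁ u W₂`.  In particular,
every double coset of a pair of standard parabolic subgroups has a unique minimal
element. -/
theorem stmt_4 (cs : CoxeterSystem M W) (W₁ W₂ : Subgroup W)
    (h₁ : IsStdParabolic cs W₁) (h₂ : IsStdParabolic cs W₂) :
    (∀ (K : Set W) (u : W), IsBrMin cs K u →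
      ∃ m : W,
        IsBrMin cs {x | ∃ a ∈ W₁, ∃ k ∈ K, ∃ b ∈ W₂, x = a * k * b} m ∧
        IsBrMin cs (dblCoset W₁ W₂ u) m) ∧
    (∀ w : W, ∃ m : W, IsBrMin cs (dblCoset W₁ W₂ w) m) := by
  refine ⟨fun K u hu => ?_, fun w => ?_⟩
  · obtain ⟨m, hm, hlift⟩ := exists_mem_dblCoset_bruhatLE_mul_mul h₁ h₂ u
    have hmin := isBrMin_dblCoset hm hlift
    refine ⟨m, ⟨?_, ?_⟩, hmin⟩
    · obtain ⟨a, ha, b, hb, rfl⟩ := hm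
      exact ⟨a, ha, u, hu.1, b, hb, rfl⟩
    · rintro _ ⟨a, ha, k, hk, b, hb, rfl⟩
      have hmu : BruhatLE cs m u := hmin.2 u ⟨1, W₁.one_mem, 1, W₂.one_mem, by group⟩
      exact hlift k (hmu.trans (hu.2 k hk)) a ha b hb
  · obtain ⟨m, hm, hlift⟩ := exists_mem_dblCoset_bruhatLE_mul_mul h₁ h₂ w
    exact ⟨m, isBrMin_dblCoset hm hlift⟩
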